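/- Let K₀ and M₀ be closed subspaces of a complex Hilbert space E whose orthogonal projections do not commute (P_{K₀} ∘ P_{M₀} ≠ P_{M₀} ∘ P_{K₀}). Set C := com(K₀, M₀), K := K₀ ⊓ Cᗮ and M := M₀ ⊓ Cᗮ. Then K ≠ ⊥, K ⊓ M = ⊥, and K ∗ M = K. (In particular the Sasaki projection K ∗ M can be strictly larger than the meet K ⊓ M.) -/

import Mathlib

variable {E : Type*} [NormedAddCommGroup E] [InnerProductSpace ℂ E] [CompleteSpace E]

/-- Orthogonal projection onto (the topological closure of) a submodule, as a
continuous linear operator on `E`. For a closed subspace `K` this is the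
orthogonal projection `P_K` onto `K` itself. -/
noncomputable def proj (K : Submodule ℂ E) : E →L[ℂ] E :=
  K.topologicalClosure.subtypeL.comp K.topologicalClosure.orthogonalProjection


/-- The commutator `com(K, M)` of two subspaces. -/
noncomputable def com (K M : Submodule ℂ E) : Submodule ℂ E :=
  (K ⊓ M) ⊔ (K ⊓ Mᗮ) ⊔ (Kᗮ ⊓ M) ⊔ (Kᗮ ⊓ Mᗮ)


/-- The Sasaki arrow `K ⇒ M`. -/
noncomputable def sasaki (K M : Submodule ℂ E) : Submodule ℂ E :=
  Kᗮ ⊔ (K ⊓ M)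


/-- The Sasaki projection `K ∗ M := (K ⇒ Mᗮ)ᗮ`. -/
noncomputable def sproj (K M : Submodule ℂ E) : Submodule ℂ E :=
  (sasaki K Mᗮ)ᗮ

/-! Peeling `K ⊓ M` and then `K ⊓ Mᗮ` off a closed subspace `K` leaves exactly `K ⊓ (com K M)ᗮ`.
If this remainder were `⊥`, then `K = (K ⊓ M) ⊔ (K ⊓ Mᗮ)`, so `P_K P_M = P_{K ⊓ M}` would be
self-adjoint and the projections would commute. Since `K ⊓ M` and `K ⊓ Mᗮ` lie in the commutator,
`K' = K ⊓ Cᗮ` and `M' = M ⊓ Cᗮ` meet trivially; peeling `M` in the same way gives `M ≤ C ⊔ M'`,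
hence `K' ⊓ M'ᗮ ≤ K ⊓ Mᗮ ⊓ Cᗮ = ⊥`, so `K' ⇒ M'ᗮ = K'ᗮ` and `K' ∗ M' = K'`. -/

open Submodule

section OrthogonalLattice

variable {F : Type*} [NormedAddCommGroup F] [InnerProductSpace ℂ F]

lemma com_comm (K M : Submodule ℂ F) : com K M = com M K := by
  simp only [com, inf_comm K, inf_comm Kᗮ]
  ac_rfl

lemma inf_le_com (K M : Submodule ℂ F) : K ⊓ M ≤ com K M :=
  le_sup_of_le_left <| le_sup_of_le_left le_sup_left

lemma inf_orthogonal_le_com (K M : Submodule ℂ F) : K ⊓ Mᗮ ≤ com K M :=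
  le_sup_of_le_left <| le_sup_of_le_left le_sup_right

lemma orthogonal_inf_le_com (K M : Submodule ℂ F) : Kᗮ ⊓ M ≤ com K M :=
  le_sup_of_le_left le_sup_right

lemma orthogonal_com (K M : Submodule ℂ F) :
    (com K M)ᗮ = (K ⊓ M)ᗮ ⊓ (K ⊓ Mᗮ)ᗮ ⊓ (Kᗮ ⊓ M)ᗮ ⊓ (Kᗮ ⊓ Mᗮ)ᗮ := by
  simp only [com, inf_orthogonal]

lemma inf_orthogonal_com_inf_inf_orthogonal_com_eq_bot (K M : Submodule ℂ F) :
    (K ⊓ (com K M)ᗮ) ⊓ (M ⊓ (com K M)ᗮ) = ⊥ :=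
  disjoint_self.1 <| (orthogonal_disjoint (com K M)).mono
    ((inf_le_inf inf_le_left inf_le_left).trans (inf_le_com K M)) (inf_le_left.trans inf_le_right)

lemma sproj_eq_self_of_inf_orthogonal_eq_bot {K M : Submodule ℂ F} [K.HasOrthogonalProjection]
    (h : K ⊓ Mᗮ = ⊥) : sproj K M = K := by
  rw [sproj, sasaki, h, sup_bot_eq, orthogonal_orthogonal]

lemma starProjection_comp_starProjection_eq_of_le_sup {K M : Submodule ℂ F}
    [K.HasOrthogonalProjection] [M.HasOrthogonalProjection] [(K ⊓ M).HasOrthogonalProjection]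
    (h : K ≤ K ⊓ M ⊔ K ⊓ Mᗮ) : K.starProjection ∘L M.starProjection = (K ⊓ M).starProjection := by
  ext x
  refine eq_starProjection_of_mem_orthogonal ((K ⊓ M).starProjection_apply_mem x).1 ?_
  refine orthogonal_le h ?_
  rw [← inf_orthogonal]
  constructor
  · rw [← sub_sub_sub_cancel_left _ _ x]
    exact sub_mem (sub_starProjection_mem_orthogonal x)
      (orthogonal_le inf_le_right (sub_starProjection_mem_orthogonal x))
  · have hM : M ≤ (K ⊓ Mᗮ)ᗮ := M.le_orthogonal_orthogonal.trans (orthogonal_le inf_le_right)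
    exact sub_mem (hM (M.starProjection_apply_mem x)) (hM ((K ⊓ M).starProjection_apply_mem x).2)

end OrthogonalLattice

lemma proj_eq_starProjection {K : Submodule ℂ E} (hK : IsClosed (K : Set E))
    [K.HasOrthogonalProjection] : proj K = K.starProjection := by
  suffices ∀ N, N = K → ∀ [N.HasOrthogonalProjection], N.starProjection = K.starProjection from
    this _ hK.submodule_topologicalClosure_eq
  rintro _ rfl _
  rfl

lemma starProjection_comp_starProjection_comm_of_le_sup {K M : Submodule ℂ E}
    [K.HasOrthogonalProjection] [M.HasOrthogonalProjection] [(K ⊓ M).HasOrthogonalProjection]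
    (h : K ≤ K ⊓ M ⊔ K ⊓ Mᗮ) :
    K.starProjection ∘L M.starProjection = M.starProjection ∘L K.starProjection :=
  ((isSelfAdjoint_starProjection K).commute_iff (isSelfAdjoint_starProjection M)).2
    (by rw [ContinuousLinearMap.mul_def, starProjection_comp_starProjection_eq_of_le_sup h]
        exact isSelfAdjoint_starProjection _) |>.eq

theorem inf_sup_inf_orthogonal_sup_inf_orthogonal_com {K M : Submodule ℂ E}
    (hK : IsClosed (K : Set E)) (hM : IsClosed (M : Set E)) :
    K ⊓ M ⊔ K ⊓ Mᗮ ⊔ K ⊓ (com K M)ᗮ = K := by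
  have : CompleteSpace ↥(K ⊓ M) := (hK.inter hM).completeSpace_coe
  have : CompleteSpace ↥(K ⊓ Mᗮ) := (hK.inter M.isClosed_orthogonal).completeSpace_coe
  refine le_antisymm (sup_le (sup_le inf_le_left inf_le_left) inf_le_left) ?_
  have hKMc : K ⊓ Mᗮ ≤ (K ⊓ M)ᗮ ⊓ K :=
    le_inf (inf_le_right.trans (orthogonal_le inf_le_right)) inf_le_left
  have hrest : (K ⊓ Mᗮ)ᗮ ⊓ ((K ⊓ M)ᗮ ⊓ K) ≤ K ⊓ (com K M)ᗮ := by
    rintro x ⟨hxKMc, hxKM, hxK⟩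
    have hxKcc : x ∈ Kᗮᗮ := K.le_orthogonal_orthogonal hxK
    rw [orthogonal_com]
    exact ⟨hxK, ⟨⟨hxKM, hxKMc⟩, orthogonal_le inf_le_left hxKcc⟩, orthogonal_le inf_le_left hxKcc⟩
  calc K = K ⊓ M ⊔ (K ⊓ M)ᗮ ⊓ K :=
        (sup_orthogonal_inf_of_hasOrthogonalProjection inf_le_left).symm
    _ = K ⊓ M ⊔ (K ⊓ Mᗮ ⊔ (K ⊓ Mᗮ)ᗮ ⊓ ((K ⊓ M)ᗮ ⊓ K)) := by
        rw [sup_orthogonal_inf_of_hasOrthogonalProjection hKMc]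
    _ ≤ K ⊓ M ⊔ K ⊓ Mᗮ ⊔ K ⊓ (com K M)ᗮ := by
        rw [← sup_assoc]
        exact sup_le_sup_left hrest _

lemma inf_orthogonal_com_inf_orthogonal_eq_bot {K M : Submodule ℂ E}
    (hK : IsClosed (K : Set E)) (hM : IsClosed (M : Set E)) :
    (K ⊓ (com K M)ᗮ) ⊓ (M ⊓ (com K M)ᗮ)ᗮ = ⊥ := by
  have hM' : M ≤ com K M ⊔ M ⊓ (com K M)ᗮ := by
    conv_lhs => rw [← inf_sup_inf_orthogonal_sup_inf_orthogonal_com hM hK, com_comm M K]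
    refine sup_le_sup_right (sup_le ?_ ?_) _
    · exact (inf_comm M K).le.trans (inf_le_com K M)
    · exact (inf_comm M Kᗮ).le.trans (orthogonal_inf_le_com K M)
  refine disjoint_self.1 ((orthogonal_disjoint (com K M)).mono ?_ (inf_le_left.trans inf_le_right))
  rintro x ⟨⟨hxK, hxC⟩, hxM⟩
  refine inf_orthogonal_le_com K M ⟨hxK, orthogonal_le hM' ?_⟩
  rw [← inf_orthogonal]
  exact ⟨hxC, hxM⟩

theorem stmt15 (K₀ M₀ : Submodule ℂ E)
    (hK₀ : IsClosed (K₀ : Set E)) (hM₀ : IsClosed (M₀ : Set E))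
    (hne : proj K₀ ∘L proj M₀ ≠ proj M₀ ∘L proj K₀) :
    K₀ ⊓ (com K₀ M₀)ᗮ ≠ ⊥ ∧
      (K₀ ⊓ (com K₀ M₀)ᗮ) ⊓ (M₀ ⊓ (com K₀ M₀)ᗮ) = ⊥ ∧
      sproj (K₀ ⊓ (com K₀ M₀)ᗮ) (M₀ ⊓ (com K₀ M₀)ᗮ) = K₀ ⊓ (com K₀ M₀)ᗮ := by
  have : CompleteSpace K₀ := hK₀.completeSpace_coe
  have : CompleteSpace M₀ := hM₀.completeSpace_coe
  have : CompleteSpace ↥(K₀ ⊓ M₀) := (hK₀.inter hM₀).completeSpace_coe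
  have : CompleteSpace ↥(K₀ ⊓ (com K₀ M₀)ᗮ) :=
    (hK₀.inter (com K₀ M₀).isClosed_orthogonal).completeSpace_coe
  refine ⟨fun hbot => hne ?_, inf_orthogonal_com_inf_inf_orthogonal_com_eq_bot K₀ M₀,
    sproj_eq_self_of_inf_orthogonal_eq_bot (inf_orthogonal_com_inf_orthogonal_eq_bot hK₀ hM₀)⟩
  have hsplit : K₀ ≤ K₀ ⊓ M₀ ⊔ K₀ ⊓ M₀ᗮ := by
    simpa only [hbot, sup_bot_eq] using (inf_sup_inf_orthogonal_sup_inf_orthogonal_com hK₀ hM₀).ge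
  rw [proj_eq_starProjection hK₀, proj_eq_starProjection hM₀]
  exact starProjection_comp_starProjection_comm_of_le_sup hsplit
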